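/- arXiv:1805.07264 — 2 statements merged into one kernel-verified Lean document; each statement's English description precedes it below -/
import Mathlib

section
/- Let $1 \le p < \infty$ and $u \in W^{1,p}(\mathbb{R})$. Then for any $h>0$, the restriction sequence $\mathbf{u} = (u(ih))_{i \in \mathbb{Z}}$ satisfies $\sum_{i \in \mathbb{Z}} h |u(ih)|^p < \infty$, i.e. $\mathbf{u} \in l_h^p$. -/
open MeasureTheory
open scoped ENNReal NNReal

lemma aux_add_rpow {p : ℝ} (hp : 1 ≤ p) {x y : ℝ} (hx : 0 ≤ x) (hy : 0 ≤ y) :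
    (x + y) ^ p ≤ 2 ^ (p - 1) * (x ^ p + y ^ p) := by
  have h := NNReal.rpow_add_le_mul_rpow_add_rpow x.toNNReal y.toNNReal hp
  have h2 := NNReal.coe_le_coe.2 h
  push_cast at h2
  simpa [Real.coe_toNNReal x hx, Real.coe_toNNReal y hy] using h2

/-- For `u ∈ W^{1,p}(ℝ)` (1 ≤ p < ∞) and any `h > 0`, the restriction
sequence `(u(ih))_{i ∈ ℤ}` belongs to `l_h^p`, i.e. `∑ᵢ h |u(ih)|^p < ∞`. -/
theorem stmt_2 (p : ℝ) (hp : 1 ≤ p)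
    (u : ℝ → ℝ) (hdiff : Differentiable ℝ u)
    (hu : MemLp u (ENNReal.ofReal p) (volume : Measure ℝ))
    (hu' : MemLp (deriv u) (ENNReal.ofReal p) (volume : Measure ℝ))
    (h : ℝ) (hh : 0 < h) :
    Summable (fun i : ℤ => h * |u ((i : ℝ) * h)| ^ p) := by
  have hp0 : 0 < p := lt_of_lt_of_le one_pos hp
  have hpe0 : ENNReal.ofReal p ≠ 0 := by
    simp [ENNReal.ofReal_eq_zero]; linarith
  have hpet : ENNReal.ofReal p ≠ ⊤ := ENNReal.ofReal_ne_top
  have hp1 : (1 : ℝ≥0∞) ≤ ENNReal.ofReal p := by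
    rw [← ENNReal.ofReal_one]; exact ENNReal.ofReal_le_ofReal hp
  -- integrability of |u|^p and |u'|^p
  have hU : Integrable (fun x => |u x| ^ p) volume := by
    have := hu.integrable_norm_rpow hpe0 hpet
    simpa [Real.norm_eq_abs, ENNReal.toReal_ofReal hp0.le] using this
  have hU' : Integrable (fun x => |deriv u x| ^ p) volume := by
    have := hu'.integrable_norm_rpow hpe0 hpet
    simpa [Real.norm_eq_abs, ENNReal.toReal_ofReal hp0.le] using this
  set E : ℝ → ℝ := fun x => |u x| ^ p + h ^ p * |deriv u x| ^ p with hE_def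
  have hE : Integrable E volume := hU.add (hU'.const_mul _)
  set S : ℤ → Set ℝ := fun i => Set.Ioc ((i : ℝ) * h) ((i : ℝ) * h + h) with hS_def
  have hSm : ∀ i, MeasurableSet (S i) := fun i => measurableSet_Ioc
  have hSd : Pairwise (Function.onFun Disjoint S) := by
    intro i j hij
    have key : ∀ i j : ℤ, i < j → Disjoint (S i) (S j) := by
      intro i j hij'
      rw [Set.Ioc_disjoint_Ioc]
      have : (i : ℝ) + 1 ≤ (j : ℝ) := by exact_mod_cast Int.add_one_le_iff.2 hij'
      have h1 : (i:ℝ) * h + h ≤ (j:ℝ) * h := by nlinarith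
      calc min ((i:ℝ)*h + h) ((j:ℝ)*h + h) ≤ (i:ℝ)*h + h := min_le_left _ _
        _ ≤ (j:ℝ)*h := h1
        _ ≤ max ((i:ℝ)*h) ((j:ℝ)*h) := le_max_right _ _
    rcases hij.lt_or_gt with h' | h'
    · exact key i j h'
    · exact (key j i h').symm
  set s : ℤ → ℝ := fun i => ∫ x in S i, E x with hs_def
  have hsum : Summable s := by
    refine (hasSum_integral_iUnion hSm hSd hE.integrableOn).summable
  -- nonnegativity of E
  have hEnn : ∀ x, 0 ≤ E x := by
    intro x
    have h1 : (0:ℝ) ≤ |u x| ^ p := Real.rpow_nonneg (abs_nonneg _) _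
    have h2 : (0:ℝ) ≤ |deriv u x| ^ p := Real.rpow_nonneg (abs_nonneg _) _
    have h3 : (0:ℝ) ≤ h ^ p := Real.rpow_nonneg hh.le _
    positivity
  -- key estimate
  have key : ∀ i : ℤ, h * |u ((i : ℝ) * h)| ^ p ≤ 2 ^ (p - 1) * s i := by
    intro i
    set a := (i : ℝ) * h with ha_def
    set b := a + h with hb_def
    have hab : a ≤ b := by simp [hb_def]; linarith
    have hfin : IsFiniteMeasure (volume.restrict (Set.Ioc a b)) := by
      constructor
      rw [Measure.restrict_apply_univ]
      exact measure_Ioc_lt_top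
    have hmem' : MemLp (deriv u) (ENNReal.ofReal p) (volume.restrict (Set.Ioc a b)) :=
      hu'.restrict _
    have hint' : IntegrableOn (deriv u) (Set.Ioc a b) volume := hmem'.integrable hp1
    have hivl : IntervalIntegrable (deriv u) volume a b := by
      rw [intervalIntegrable_iff_integrableOn_Ioc_of_le hab]
      exact hint'
    set A := ∫ t in Set.Ioc a b, |deriv u t| with hA_def
    have hAnn : 0 ≤ A := setIntegral_nonneg (measurableSet_Ioc) (fun t _ => abs_nonneg _)
    -- pointwise: |u a| ≤ |u x| + A for x ∈ Ioc a b
    have hpt : ∀ x ∈ Set.Ioc a b, |u a| ≤ |u x| + A := by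
      intro x hx
      have hax : a ≤ x := le_of_lt hx.1
      have hxb : x ≤ b := hx.2
      have hivl2 : IntervalIntegrable (deriv u) volume a x := by
        rw [intervalIntegrable_iff_integrableOn_Ioc_of_le hax]
        exact hint'.mono_set (Set.Ioc_subset_Ioc_right hxb)
      have hftc : ∫ t in a..x, deriv u t = u x - u a :=
        intervalIntegral.integral_deriv_eq_sub (fun t _ => hdiff t) hivl2
      have habs : |u x - u a| ≤ A := by
        rw [← hftc]
        have h1 : |∫ t in a..x, deriv u t| ≤ ∫ t in a..x, |deriv u t| :=
          intervalIntegral.abs_integral_le_integral_abs hax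
        have h2 : (∫ t in a..x, |deriv u t|) ≤ A := by
          rw [intervalIntegral.integral_of_le hax]
          apply setIntegral_mono_set hint'.abs
          · exact Filter.Eventually.of_forall (fun t => abs_nonneg _)
          · exact Filter.Eventually.of_forall (Set.Ioc_subset_Ioc_right hxb)
        linarith
      calc |u a| = |u x - (u x - u a)| := by ring_nf
        _ ≤ |u x| + |u x - u a| := abs_sub _ _
        _ ≤ |u x| + A := by linarith
    -- Hölder: A ^ p ≤ h ^ (p - 1) * ∫ |u'|^p on Ioc a b
    have hvol : (volume (Set.Ioc a b)).toReal = h := by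
      rw [Real.volume_Ioc]
      simp [hb_def, ENNReal.toReal_ofReal hh.le]
    set B := ∫ x in Set.Ioc a b, |deriv u x| ^ p with hB_def
    have hBnn : 0 ≤ B :=
      setIntegral_nonneg measurableSet_Ioc (fun t _ => Real.rpow_nonneg (abs_nonneg _) _)
    have hholder : A ^ p ≤ h ^ (p - 1) * B := by
      rcases eq_or_lt_of_le hp with hp1' | hp1'
      · subst hp1'
        simp [hA_def, hB_def, Real.rpow_one]
      · set q := p / (p - 1) with hq_def
        have hpq : p.HolderConjugate q := Real.HolderConjugate.conjExponent hp1'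
        have hone : MemLp (fun _ : ℝ => (1:ℝ)) (ENNReal.ofReal q)
            (volume.restrict (Set.Ioc a b)) := memLp_const _
        have hH := integral_mul_norm_le_Lp_mul_Lq (μ := volume.restrict (Set.Ioc a b))
          hpq hmem' hone
        simp only [Real.norm_eq_abs, norm_one, mul_one, abs_one, Real.one_rpow] at hH
        rw [setIntegral_const, smul_eq_mul, mul_one, measureReal_def, hvol] at hH
        -- hH : A ≤ B ^ (1/p) * h ^ (1/q)
        have hAB : A ≤ B ^ (1/p) * h ^ (1/q) := hH
        have h1 : A ^ p ≤ (B ^ (1/p) * h ^ (1/q)) ^ p :=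
          Real.rpow_le_rpow hAnn hAB hp0.le
        have h2 : (B ^ (1/p) * h ^ (1/q)) ^ p = B * h ^ (p - 1) := by
          rw [Real.mul_rpow (Real.rpow_nonneg hBnn _) (Real.rpow_nonneg hh.le _),
            ← Real.rpow_mul hBnn, ← Real.rpow_mul hh.le,
            one_div_mul_cancel hp0.ne', Real.rpow_one]
          congr 1
          rw [one_div, inv_mul_eq_div, hpq.div_conj_eq_sub_one]
        rw [h2] at h1
        linarith
    -- integrate the pointwise bound
    have hconst : h * |u a| ^ p = ∫ _ in Set.Ioc a b, |u a| ^ p := by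
      rw [setIntegral_const, smul_eq_mul, measureReal_def, hvol]
    have hmono : (∫ _ in Set.Ioc a b, |u a| ^ p) ≤
        ∫ x in Set.Ioc a b, 2 ^ (p - 1) * (|u x| ^ p + A ^ p) := by
      apply setIntegral_mono_on
      · exact integrableOn_const (by rw [Real.volume_Ioc]; exact ENNReal.ofReal_ne_top)
      · exact ((hU.integrableOn.add (integrableOn_const
          (by rw [Real.volume_Ioc]; exact ENNReal.ofReal_ne_top))).const_mul _)
      · exact measurableSet_Ioc
      · intro x hx
        calc |u a| ^ p ≤ (|u x| + A) ^ p :=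
              Real.rpow_le_rpow (abs_nonneg _) (hpt x hx) hp0.le
          _ ≤ 2 ^ (p - 1) * (|u x| ^ p + A ^ p) := aux_add_rpow hp (abs_nonneg _) hAnn
    have hsplit : ∫ x in Set.Ioc a b, 2 ^ (p - 1) * (|u x| ^ p + A ^ p) =
        2 ^ (p - 1) * ((∫ x in Set.Ioc a b, |u x| ^ p) + h * A ^ p) := by
      rw [integral_const_mul]
      congr 1
      rw [integral_add hU.integrableOn (integrableOn_const
        (by rw [Real.volume_Ioc]; exact ENNReal.ofReal_ne_top))]
      rw [setIntegral_const, smul_eq_mul, measureReal_def, hvol]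
    have hAp : h * A ^ p ≤ h ^ p * B := by
      have := mul_le_mul_of_nonneg_left hholder hh.le
      calc h * A ^ p ≤ h * (h ^ (p-1) * B) := this
        _ = h ^ p * B := by
            rw [← mul_assoc]
            congr 1
            nth_rewrite 1 [← Real.rpow_one h]
            rw [← Real.rpow_add hh]
            ring_nf
    have hsi : s i = (∫ x in Set.Ioc a b, |u x| ^ p) + h ^ p * B := by
      rw [hs_def]
      simp only [hS_def, hE_def]
      rw [integral_add hU.integrableOn (hU'.integrableOn.const_mul _), integral_const_mul]
    have h2pos : (0:ℝ) ≤ 2 ^ (p - 1) := Real.rpow_nonneg (by norm_num) _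
    calc h * |u a| ^ p ≤ ∫ x in Set.Ioc a b, 2 ^ (p - 1) * (|u x| ^ p + A ^ p) := by
          rw [hconst]; exact hmono
      _ = 2 ^ (p - 1) * ((∫ x in Set.Ioc a b, |u x| ^ p) + h * A ^ p) := hsplit
      _ ≤ 2 ^ (p - 1) * ((∫ x in Set.Ioc a b, |u x| ^ p) + h ^ p * B) := by
          apply mul_le_mul_of_nonneg_left _ h2pos
          linarith
      _ = 2 ^ (p - 1) * s i := by rw [hsi]
  apply Summable.of_nonneg_of_le _ key (hsum.mul_left _)
  intro i
  have : (0:ℝ) ≤ |u ((i:ℝ) * h)| ^ p := Real.rpow_nonneg (abs_nonneg _) _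
  positivity
end

section
/- Let $u \in W^{2,1}(\mathbb{R})$ and $h > 0$. Then $\left| \int_{\mathbb{R}} u(x)\,dx - \sum_{i \in \mathbb{Z}} h\, u(ih) \right| \le h^2 \|u''\|_{L^1}$. -/
open MeasureTheory intervalIntegral

/-- Midpoint-rule error estimate on a single interval `[c - h/2, c + h/2]`. -/
private lemma key_step (u : ℝ → ℝ) (hdiff : Differentiable ℝ u)
    (hdiff2 : Differentiable ℝ (deriv u))
    (hu'' : Integrable (deriv (deriv u)) (volume : Measure ℝ)) (c h : ℝ) (hh : 0 ≤ h) :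
    |(∫ x in (c - h/2)..(c + h/2), u x) - h * u c|
      ≤ h^2/2 * ∫ s in (c - h/2)..(c + h/2), |deriv (deriv u) s| := by
  have hr : (0:ℝ) ≤ h/2 := by linarith
  have hab : c - h/2 ≤ c + h/2 := by linarith
  set M : ℝ := ∫ s in (c - h/2)..(c + h/2), |deriv (deriv u) s| with hMdef
  have hM0 : 0 ≤ M := integral_nonneg hab (fun s _ => abs_nonneg _)
  -- FTC for deriv u
  have ftc2 : ∀ t : ℝ, (∫ s in c..t, deriv (deriv u) s) = deriv u t - deriv u c := fun t =>
    integral_deriv_eq_sub (fun x _ => hdiff2 x) hu''.intervalIntegrable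
  have habs : Integrable (fun x => |deriv (deriv u) x|) (volume : Measure ℝ) := hu''.abs
  have hbound : ∀ t ∈ Set.Icc (c - h/2) (c + h/2), |deriv u t - deriv u c| ≤ M := by
    intro t ht
    rw [← ftc2 t]
    have h1 : |∫ s in c..t, deriv (deriv u) s| ≤ ∫ s in Set.uIoc c t, |deriv (deriv u) s| := by
      simpa [Real.norm_eq_abs] using
        (norm_integral_le_integral_norm_uIoc (f := deriv (deriv u)) (a := c) (b := t)
          (μ := volume))
    have hsub : Set.uIoc c t ⊆ Set.Ioc (c - h/2) (c + h/2) := by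
      rw [Set.uIoc]
      apply Set.Ioc_subset_Ioc
      · exact le_min (by linarith) ht.1
      · exact max_le (by linarith) ht.2
    have h2 : (∫ s in Set.uIoc c t, |deriv (deriv u) s|)
        ≤ ∫ s in Set.Ioc (c - h/2) (c + h/2), |deriv (deriv u) s| := by
      apply setIntegral_mono_set habs.integrableOn
      · exact Filter.Eventually.of_forall (fun s => abs_nonneg _)
      · exact HasSubset.Subset.eventuallyLE hsub
    have h3 : M = ∫ s in Set.Ioc (c - h/2) (c + h/2), |deriv (deriv u) s| :=
      integral_of_le hab
    linarith
  -- FTC for u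
  have ftc1 : ∀ x : ℝ, (∫ t in c..x, deriv u t) = u x - u c := fun x =>
    integral_deriv_eq_sub (fun t _ => hdiff t)
      (hdiff2.continuous.intervalIntegrable c x)
  have fdef : ∀ x : ℝ, u x - u c - deriv u c * (x - c)
      = ∫ t in c..x, (deriv u t - deriv u c) := by
    intro x
    rw [integral_sub (hdiff2.continuous.intervalIntegrable c x) intervalIntegrable_const,
      ftc1, intervalIntegral.integral_const, smul_eq_mul]
    ring
  have hfb : ∀ x ∈ Set.uIoc (c - h/2) (c + h/2),
      ‖u x - u c - deriv u c * (x - c)‖ ≤ h/2 * M := by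
    intro x hx
    have hx' : x ∈ Set.Icc (c - h/2) (c + h/2) := by
      rw [Set.uIoc_of_le hab] at hx
      exact ⟨hx.1.le, hx.2⟩
    rw [Real.norm_eq_abs, fdef x]
    have hb : ∀ t ∈ Set.uIoc c x, ‖deriv u t - deriv u c‖ ≤ M := by
      intro t ht
      rw [Real.norm_eq_abs]
      apply hbound t
      rcases Set.mem_uIoc.mp ht with h' | h'
      · exact ⟨by linarith [hx'.1, hx'.2, h'.1], by linarith [hx'.2, h'.2]⟩
      · exact ⟨by linarith [hx'.1, h'.1], by linarith [h'.2]⟩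
    have := norm_integral_le_of_norm_le_const hb
    rw [Real.norm_eq_abs] at this
    have hxc : |x - c| ≤ h/2 := abs_le.mpr ⟨by linarith [hx'.1], by linarith [hx'.2]⟩
    calc |∫ t in c..x, (deriv u t - deriv u c)| ≤ M * |x - c| := this
      _ ≤ h/2 * M := by nlinarith
  have hlin : (∫ x in (c - h/2)..(c + h/2), (x - c)) = 0 := by
    rw [integral_comp_sub_right (fun x => x) c,
      show c - h/2 - c = -(h/2) by ring, show c + h/2 - c = h/2 by ring, integral_id]
    ring
  have Edef : (∫ x in (c - h/2)..(c + h/2), (u x - u c - deriv u c * (x - c)))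
      = (∫ x in (c - h/2)..(c + h/2), u x) - h * u c := by
    have h1 : IntervalIntegrable u volume (c - h/2) (c + h/2) :=
      hdiff.continuous.intervalIntegrable _ _
    have h2 : IntervalIntegrable (fun x : ℝ => u x - u c) volume (c - h/2) (c + h/2) :=
      h1.sub intervalIntegrable_const
    have h3 : IntervalIntegrable (fun x : ℝ => deriv u c * (x - c)) volume (c - h/2) (c + h/2) :=
      (Continuous.intervalIntegrable (by continuity) _ _)
    rw [integral_sub h2 h3, integral_sub h1 intervalIntegrable_const,
      intervalIntegral.integral_const, intervalIntegral.integral_const_mul, hlin, smul_eq_mul]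
    ring
  rw [← Edef]
  have := norm_integral_le_of_norm_le_const hfb
  rw [Real.norm_eq_abs] at this
  calc |∫ x in (c - h/2)..(c + h/2), (u x - u c - deriv u c * (x - c))|
      ≤ (h/2 * M) * |c + h/2 - (c - h/2)| := this
    _ = h^2/2 * M := by rw [show c + h/2 - (c - h/2) = h by ring, abs_of_nonneg hh]; ring

/-- For `u ∈ W^{2,1}(ℝ)` and `h > 0`,
`|∫ u dx - ∑ᵢ h u(ih)| ≤ h² ‖u''‖_{L¹}`. -/
theorem stmt_5 (u : ℝ → ℝ) (hdiff : Differentiable ℝ u) (hdiff2 : Differentiable ℝ (deriv u))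
    (hu : Integrable u (volume : Measure ℝ)) (hu' : Integrable (deriv u) (volume : Measure ℝ))
    (hu'' : Integrable (deriv (deriv u)) (volume : Measure ℝ))
    (h : ℝ) (hh : 0 < h) :
    |(∫ x, u x) - ∑' i : ℤ, h * u ((i : ℝ) * h)| ≤ h ^ 2 * ∫ x, |deriv (deriv u) x| := by
  set s : ℤ → Set ℝ := fun i => Set.Ico ((i:ℝ)*h - h/2) ((i:ℝ)*h + h/2) with hs
  have hmeas : ∀ i : ℤ, MeasurableSet (s i) := fun i => measurableSet_Ico
  have hmem : ∀ (x : ℝ) (i : ℤ), x ∈ s i ↔ round (x / h) = i := by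
    intro x i
    rw [round_eq, Int.floor_eq_iff]
    simp only [hs, Set.mem_Ico]
    constructor
    · rintro ⟨h1, h2⟩
      constructor
      · have : ((i:ℝ) - 1/2) * h ≤ x := by nlinarith
        have := (le_div_iff₀ hh).mpr this
        linarith
      · have : x < ((i:ℝ) + 1/2) * h := by nlinarith
        have := (div_lt_iff₀ hh).mpr this
        linarith
    · rintro ⟨h1, h2⟩
      have e1 : ((i:ℝ) - 1/2) ≤ x / h := by linarith
      have e2 : x / h < ((i:ℝ) + 1/2) := by linarith
      have f1 := (le_div_iff₀ hh).mp e1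
      have f2 := (div_lt_iff₀ hh).mp e2
      constructor <;> nlinarith
  have hUnion : (⋃ i, s i) = Set.univ := by
    ext x
    simp only [Set.mem_iUnion, Set.mem_univ, iff_true]
    exact ⟨round (x/h), (hmem x _).mpr rfl⟩
  have hdisj : Pairwise (Function.onFun Disjoint s) := by
    intro i j hij
    simp only [Function.onFun, Set.disjoint_left]
    intro x hxi hxj
    exact hij (((hmem x i).mp hxi).symm.trans ((hmem x j).mp hxj))
  have hSu : HasSum (fun i : ℤ => ∫ x in s i, u x) (∫ x, u x) := by
    have := hasSum_integral_iUnion hmeas hdisj (by rw [hUnion]; exact hu.integrableOn)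
    rwa [hUnion, setIntegral_univ] at this
  have hSv : HasSum (fun i : ℤ => ∫ x in s i, |deriv (deriv u) x|)
      (∫ x, |deriv (deriv u) x|) := by
    have := hasSum_integral_iUnion hmeas hdisj (by rw [hUnion]; exact hu''.abs.integrableOn)
    rwa [hUnion, setIntegral_univ] at this
  have hconv : ∀ (f : ℝ → ℝ) (i : ℤ), (∫ x in s i, f x)
      = ∫ x in ((i:ℝ)*h - h/2)..((i:ℝ)*h + h/2), f x := by
    intro f i
    rw [integral_of_le (by linarith), hs, MeasureTheory.integral_Ioc_eq_integral_Ioo,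
      MeasureTheory.integral_Ico_eq_integral_Ioo]
  have key : ∀ i : ℤ, |(∫ x in s i, u x) - h * u ((i:ℝ)*h)|
      ≤ h^2/2 * ∫ x in s i, |deriv (deriv u) x| := by
    intro i
    rw [hconv u i, hconv (fun x => |deriv (deriv u) x|) i]
    exact key_step u hdiff hdiff2 hu'' ((i:ℝ)*h) h hh.le
  set b : ℤ → ℝ := fun i => h^2/2 * ∫ x in s i, |deriv (deriv u) x| with hb
  have hSb : HasSum b (h^2/2 * ∫ x, |deriv (deriv u) x|) := hSv.mul_left _
  set e : ℤ → ℝ := fun i => (∫ x in s i, u x) - h * u ((i:ℝ)*h) with he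
  have he_sum : Summable e := by
    apply Summable.of_norm_bounded (g := b) hSb.summable
    intro i
    rw [Real.norm_eq_abs]
    exact key i
  have htsum : (∑' i : ℤ, h * u ((i:ℝ)*h)) = (∫ x, u x) - ∑' i, e i := by
    have : HasSum (fun i : ℤ => h * u ((i:ℝ)*h)) ((∫ x, u x) - ∑' i, e i) := by
      have := hSu.sub he_sum.hasSum
      simpa [he] using this
    exact this.tsum_eq
  rw [htsum]
  have h1 : |(∫ x, u x) - ((∫ x, u x) - ∑' i, e i)| = |∑' i, e i| := by
    rw [show (∫ x, u x) - ((∫ x, u x) - ∑' i, e i) = ∑' i, e i by ring]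
  rw [h1]
  have h2 : |∑' i, e i| ≤ ∑' i, |e i| := by
    simpa [Real.norm_eq_abs] using norm_tsum_le_tsum_norm (f := e) he_sum.abs
  have h3 : (∑' i, |e i|) ≤ ∑' i, b i := Summable.tsum_le_tsum key he_sum.abs hSb.summable
  have h4 : (∑' i, b i) = h^2/2 * ∫ x, |deriv (deriv u) x| := hSb.tsum_eq
  have h5 : (0:ℝ) ≤ ∫ x, |deriv (deriv u) x| := integral_nonneg (fun x => abs_nonneg _)
  nlinarith [sq_nonneg h]
end
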